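/- arXiv:2103.09376 — 3 statements merged into one kernel-verified Lean document; each statement's English description precedes it below -/
import Mathlib

section
/- Let σ_0 > 0, p ∈ (0,∞), and let f be a measurable function on ℝ with A_{σ_0}(f)_p < ∞. Then σ ↦ A_σ(f)_p is nonincreasing on [σ_0, ∞) and is left-continuous on (σ_0, ∞), i.e., lim_{τ→σ⁻} A_τ(f)_p = A_σ(f)_p for all σ > σ_0. -/
/-!
Fix `σ > σ₀` and `g` of type `σ`, and let `g₀` be of type `σ₀` with `‖f - g₀‖_p < ∞`, so that
`u = g - g₀` lies in `L_p`. For `σ₀ / σ < l < 1` the function `g₀ + u(l ·)` has type `lσ < σ`,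
and `f - (g₀ + u(l ·)) = (f - g) + (u - u(l ·))`. Dilation is continuous on `L_p` (check it on
the dense subspace of compactly supported continuous functions), and `‖·‖_p` is continuous under
`L_p`-small perturbations even for `p < 1`, by the `p`-triangle inequality
`‖a + b‖_p^p ≤ ‖a‖_p^p + ‖b‖_p^p`. Hence the `A_τ(f)_p` with `τ < σ` come arbitrarily close to
`‖f - g‖_p`.
-/

open MeasureTheory Set Filter
open scoped ENNReal

/-- `g` is an entire function of exponential type `σ`. -/
def ExpType (σ : ℝ) (g : ℂ → ℂ) : Prop :=
  Differentiable ℂ g ∧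
    ∀ ε > (0 : ℝ), ∃ C > (0 : ℝ), ∀ z : ℂ, ‖g z‖ ≤ C * Real.exp ((σ + ε) * ‖z‖)

/-- Error of best `L_p(ℝ)`-approximation of `f` by entire functions of exponential type `σ`. -/
noncomputable def Aerr (σ : ℝ) (f : ℝ → ℂ) (p : ℝ≥0∞) : ℝ≥0∞ :=
  ⨅ g ∈ {g : ℂ → ℂ | ExpType σ g}, eLpNorm (fun x : ℝ => f x - g x) p volume

open scoped Topology

namespace ExpType

variable {σ τ : ℝ} {g g₁ g₂ : ℂ → ℂ}

theorem mono (hg : ExpType σ g) (h : σ ≤ τ) : ExpType τ g := by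
  refine ⟨hg.1, fun ε hε => ?_⟩
  obtain ⟨C, hC, hb⟩ := hg.2 ε hε
  refine ⟨C, hC, fun z => (hb z).trans ?_⟩
  gcongr

theorem add (h₁ : ExpType σ g₁) (h₂ : ExpType σ g₂) :
    ExpType σ (fun z => g₁ z + g₂ z) := by
  refine ⟨h₁.1.add h₂.1, fun ε hε => ?_⟩
  obtain ⟨C₁, hC₁, hb₁⟩ := h₁.2 ε hε
  obtain ⟨C₂, hC₂, hb₂⟩ := h₂.2 ε hε
  refine ⟨C₁ + C₂, add_pos hC₁ hC₂, fun z => ?_⟩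
  calc ‖g₁ z + g₂ z‖ ≤ ‖g₁ z‖ + ‖g₂ z‖ := norm_add_le _ _
    _ ≤ (C₁ + C₂) * Real.exp ((σ + ε) * ‖z‖) := by
        rw [add_mul]
        exact add_le_add (hb₁ z) (hb₂ z)

theorem neg (hg : ExpType σ g) : ExpType σ (fun z => -g z) :=
  ⟨hg.1.neg, fun ε hε => by simpa only [norm_neg] using hg.2 ε hε⟩

theorem sub (h₁ : ExpType σ g₁) (h₂ : ExpType σ g₂) :
    ExpType σ (fun z => g₁ z - g₂ z) := by
  simpa only [sub_eq_add_neg] using h₁.add h₂.neg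

theorem comp_mul (hg : ExpType σ g) {l : ℝ} (hl : 0 < l) :
    ExpType (l * σ) (fun z => g (l * z)) := by
  refine ⟨hg.1.comp (differentiable_id.const_mul _), fun ε hε => ?_⟩
  obtain ⟨C, hC, hb⟩ := hg.2 (ε / l) (div_pos hε hl)
  refine ⟨C, hC, fun z => (hb _).trans_eq ?_⟩
  rw [norm_mul, Complex.norm_real, Real.norm_of_nonneg hl.le]
  congr 2
  field_simp

end ExpType

theorem Aerr_le_eLpNorm {σ : ℝ} {g : ℂ → ℂ} (hg : ExpType σ g) (f : ℝ → ℂ) (p : ℝ≥0∞) :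
    Aerr σ f p ≤ eLpNorm (fun x : ℝ => f x - g x) p volume :=
  iInf₂_le g hg

theorem exists_expType_eLpNorm_lt {σ : ℝ} {f : ℝ → ℂ} {p a : ℝ≥0∞} (h : Aerr σ f p < a) :
    ∃ g, ExpType σ g ∧ eLpNorm (fun x : ℝ => f x - g x) p volume < a := by
  simpa only [Aerr, iInf_lt_iff, mem_ofPred_eq, exists_prop] using h

theorem Aerr_antitone (f : ℝ → ℂ) (p : ℝ≥0∞) : Antitone fun σ => Aerr σ f p :=
  fun _ _ h => le_iInf₂ fun _ hg => Aerr_le_eLpNorm (hg.mono h) f p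

section Lp

variable {α E : Type*} [MeasurableSpace α] {μ : Measure α} [NormedAddCommGroup E]
  {p : ℝ≥0∞}

theorem eLpNorm'_add_rpow_le {q : ℝ} {f g : α → E} (hf : AEStronglyMeasurable f μ)
    (hq0 : 0 < q) (hq1 : q ≤ 1) :
    eLpNorm' (f + g) q μ ^ q ≤ eLpNorm' f q μ ^ q + eLpNorm' g q μ ^ q := by
  simp only [← lintegral_rpow_enorm_eq_rpow_eLpNorm' hq0]
  calc ∫⁻ a, ‖(f + g) a‖ₑ ^ q ∂μ ≤ ∫⁻ a, (‖f a‖ₑ ^ q + ‖g a‖ₑ ^ q) ∂μ :=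
        lintegral_mono fun a => (ENNReal.rpow_le_rpow (enorm_add_le _ _) hq0.le).trans
          (ENNReal.rpow_add_le_add_rpow _ _ hq0.le hq1)
    _ = _ := lintegral_add_left' (hf.enorm.pow_const q) _

theorem eventually_eLpNorm_add_lt {ι : Type*} {l : Filter ι} {f : α → E} {g : ι → α → E}
    (hf : AEStronglyMeasurable f μ) (hg : ∀ i, AEStronglyMeasurable (g i) μ)
    (hg0 : Tendsto (fun i => eLpNorm (g i) p μ) l (𝓝 0)) {a : ℝ≥0∞}
    (ha : eLpNorm f p μ < a) :
    ∀ᶠ i in l, eLpNorm (f + g i) p μ < a := by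
  rcases le_or_gt 1 p with hp1 | hp1
  · have hlim : Tendsto (fun i => eLpNorm f p μ + eLpNorm (g i) p μ) l
        (𝓝 (eLpNorm f p μ)) := by
      simpa using tendsto_const_nhds.add hg0
    filter_upwards [hlim.eventually_lt_const ha] with i hi
    exact (eLpNorm_add_le hf (hg i) hp1).trans_lt hi
  rcases eq_or_ne p 0 with rfl | hp0
  · simpa using Eventually.of_forall fun _ => ha
  simp only [eLpNorm_eq_eLpNorm' hp0 (hp1.trans ENNReal.one_lt_top).ne] at hg0 ha ⊢
  set q := p.toReal
  have hq0 : 0 < q := ENNReal.toReal_pos hp0 (hp1.trans ENNReal.one_lt_top).ne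
  have hq1 : q ≤ 1 := by simpa using ENNReal.toReal_mono ENNReal.one_ne_top hp1.le
  have hlim : Tendsto (fun i => (eLpNorm' f q μ ^ q + eLpNorm' (g i) q μ ^ q) ^ q⁻¹) l
      (𝓝 (eLpNorm' f q μ)) := by
    have := (((ENNReal.continuous_rpow_const (y := q)).tendsto _).comp hg0).const_add
      (eLpNorm' f q μ ^ q)
    simpa [Function.comp_def, ENNReal.zero_rpow_of_pos hq0, ← ENNReal.rpow_mul,
      mul_inv_cancel₀ hq0.ne'] using
      ((ENNReal.continuous_rpow_const (y := q⁻¹)).tendsto _).comp this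
  filter_upwards [hlim.eventually_lt_const ha] with i hi
  exact lt_of_le_of_lt ((ENNReal.le_rpow_inv_iff hq0).2 (eLpNorm'_add_rpow_le hf hq0 hq1)) hi

end Lp

section Dilation

variable {E : Type*} [NormedAddCommGroup E] {p : ℝ≥0∞}

theorem MeasureTheory.AEStronglyMeasurable.map_mul_left {w : ℝ → E}
    (hw : AEStronglyMeasurable w volume) {l : ℝ} (hl : l ≠ 0) :
    AEStronglyMeasurable w (Measure.map (l * ·) volume) := by
  rw [Real.map_volume_mul_left hl]
  exact hw.smul_measure _

theorem MeasureTheory.AEStronglyMeasurable.comp_mul_left {w : ℝ → E}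
    (hw : AEStronglyMeasurable w volume) {l : ℝ} (hl : l ≠ 0) :
    AEStronglyMeasurable (fun x => w (l * x)) volume :=
  (hw.map_mul_left hl).comp_aemeasurable (measurable_const_mul l).aemeasurable

theorem eLpNorm_comp_mul_left (hp : p ≠ ⊤) {w : ℝ → E} (hw : AEStronglyMeasurable w volume)
    {l : ℝ} (hl : l ≠ 0) :
    eLpNorm (fun x => w (l * x)) p volume
      = ENNReal.ofReal |l⁻¹| ^ (1 / p).toReal * eLpNorm w p volume := by
  rw [← smul_eq_mul, ← eLpNorm_smul_measure_of_ne_top hp, ← Real.map_volume_mul_left hl,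
    eLpNorm_map_measure (hw.map_mul_left hl) (measurable_const_mul l).aemeasurable]
  rfl

theorem HasCompactSupport.tendsto_eLpNorm_sub_comp_mul_left (hp : p ≠ ⊤) {φ : ℝ → E}
    (hsupp : HasCompactSupport φ) (hφ : Continuous φ) :
    Tendsto (fun l : ℝ => eLpNorm (fun x => φ x - φ (l * x)) p volume) (𝓝 1) (𝓝 0) := by
  rcases eq_or_ne p 0 with rfl | hp0
  · simp
  obtain ⟨C, hC⟩ := hφ.bounded_above_of_compact_support hsupp
  obtain ⟨R, hR0, hR⟩ := hsupp.exists_pos_le_norm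
  have hq0 : 0 < p.toReal := ENNReal.toReal_pos hp0 hp
  simp_rw [eLpNorm_eq_lintegral_rpow_enorm_toReal hp0 hp]
  set q := p.toReal
  have hlim : Tendsto (fun l : ℝ => ∫⁻ x, ‖φ x - φ (l * x)‖ₑ ^ q) (𝓝 1) (𝓝 0) := by
    have := tendsto_lintegral_filter_of_dominated_convergence (μ := volume) (l := 𝓝 (1 : ℝ))
      (F := fun l x => ‖φ x - φ (l * x)‖ₑ ^ q) (f := 0)
      ((Icc (-(2 * R)) (2 * R)).indicator fun _ => ENNReal.ofReal (2 * C) ^ q) ?_ ?_ ?_ ?_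
    · simpa using this
    · exact Eventually.of_forall fun l => Continuous.measurable (by fun_prop)
    · filter_upwards [Ioi_mem_nhds (by norm_num : (1 / 2 : ℝ) < 1)] with l (hl : 1 / 2 < l)
      refine Eventually.of_forall fun x => ?_
      by_cases hx : x ∈ Icc (-(2 * R)) (2 * R)
      · rw [indicator_of_mem hx, ← ofReal_norm]
        gcongr
        linarith [norm_sub_le (φ x) (φ (l * x)), hC x, hC (l * x)]
      · have hx' : 2 * R < |x| := by
          by_contra! h
          exact hx (abs_le.1 h)
        have h₁ : φ x = 0 := hR x (by rw [Real.norm_eq_abs]; linarith)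
        have h₂ : φ (l * x) = 0 := hR _ (by
          rw [Real.norm_eq_abs, abs_mul, abs_of_pos (by linarith)]
          nlinarith)
        simp [indicator_of_notMem hx, h₁, h₂, ENNReal.zero_rpow_of_pos hq0]
    · simp [lintegral_indicator_const measurableSet_Icc, ENNReal.mul_eq_top, hq0.not_gt]
    · refine Eventually.of_forall fun x => ?_
      have : Continuous fun l : ℝ => ‖φ x - φ (l * x)‖ₑ ^ q := by fun_prop
      simpa [ENNReal.zero_rpow_of_pos hq0] using this.tendsto 1
  simpa [Function.comp_def, ENNReal.zero_rpow_of_pos (inv_pos.2 hq0)] using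
    ((ENNReal.continuous_rpow_const (y := 1 / q)).tendsto 0).comp hlim

theorem eLpNorm_sub_comp_mul_left_le (hp : p ≠ ⊤) {u φ : ℝ → E}
    (hu : AEStronglyMeasurable u volume) (hφ : AEStronglyMeasurable φ volume) {l : ℝ}
    (hl : l ≠ 0) :
    eLpNorm (fun x => u x - u (l * x)) p volume
      ≤ ENNReal.LpAddConst p * (eLpNorm (u - φ) p volume + ENNReal.LpAddConst p *
          (eLpNorm (fun x => φ x - φ (l * x)) p volume
            + ENNReal.ofReal |l⁻¹| ^ (1 / p).toReal * eLpNorm (u - φ) p volume)) := by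
  have hsplit : (fun x => u x - u (l * x))
      = (u - φ) + ((fun x => φ x - φ (l * x)) + fun x => φ (l * x) - u (l * x)) := by
    ext x
    simp only [Pi.add_apply, Pi.sub_apply]
    abel
  have hφφ : AEStronglyMeasurable (fun x => φ x - φ (l * x)) volume :=
    hφ.sub (hφ.comp_mul_left hl)
  have hφu : AEStronglyMeasurable (fun x => φ (l * x) - u (l * x)) volume :=
    (hφ.sub hu).comp_mul_left hl
  have hscale : eLpNorm (fun x => φ (l * x) - u (l * x)) p volume
      = ENNReal.ofReal |l⁻¹| ^ (1 / p).toReal * eLpNorm (u - φ) p volume := by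
    rw [eLpNorm_comp_mul_left hp (w := fun y => φ y - u y) (hφ.sub hu) hl]
    exact congrArg _ (eLpNorm_sub_comm φ u p volume)
  rw [hsplit, ← hscale]
  refine (eLpNorm_add_le' (hu.sub hφ) (hφφ.add hφu) p).trans ?_
  gcongr
  exact eLpNorm_add_le' hφφ hφu p

theorem MeasureTheory.MemLp.tendsto_eLpNorm_sub_comp_mul_left [NormedSpace ℝ E] (hp : p ≠ ⊤)
    {u : ℝ → E} (hu : MemLp u p volume) :
    Tendsto (fun l : ℝ => eLpNorm (fun x => u x - u (l * x)) p volume) (𝓝 1) (𝓝 0) := by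
  rw [ENNReal.tendsto_nhds_zero]
  intro ε hε
  set C := ENNReal.LpAddConst p
  set K := C * (1 + C * (1 + 2 ^ (1 / p).toReal))
  have hK : K ≠ ⊤ := by simp [K, C, ENNReal.mul_eq_top, (ENNReal.LpAddConst_lt_top p).ne]
  obtain ⟨δ, hδ0, hδ⟩ := ENNReal.exists_nnreal_pos_mul_lt hK hε.ne'
  obtain ⟨φ, hsupp, huφ, hφ, -⟩ :=
    hu.exists_hasCompactSupport_eLpNorm_sub_le hp (ENNReal.coe_ne_zero.2 hδ0.ne')
  filter_upwards [Ioi_mem_nhds (by norm_num : (1 / 2 : ℝ) < 1),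
    ENNReal.tendsto_nhds_zero.1 (hsupp.tendsto_eLpNorm_sub_comp_mul_left hp hφ) δ
      (ENNReal.coe_pos.2 hδ0)] with l (hl : 1 / 2 < l) hφl
  have hl0 : 0 < l := by linarith
  have hl2 : ENNReal.ofReal |l⁻¹| ≤ 2 := by
    rw [abs_of_pos (inv_pos.2 hl0)]
    refine ENNReal.ofReal_le_of_le_toReal ?_
    rw [ENNReal.toReal_ofNat, inv_le_comm₀ hl0 two_pos]
    linarith
  calc eLpNorm (fun x => u x - u (l * x)) p volume
      ≤ C * (eLpNorm (u - φ) p volume + C * (eLpNorm (fun x => φ x - φ (l * x)) p volume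
          + ENNReal.ofReal |l⁻¹| ^ (1 / p).toReal * eLpNorm (u - φ) p volume)) :=
        eLpNorm_sub_comp_mul_left_le hp hu.1 hφ.aestronglyMeasurable hl0.ne'
    _ ≤ C * (δ + C * (δ + 2 ^ (1 / p).toReal * δ)) := by gcongr
    _ = δ * K := by ring
    _ ≤ ε := hδ.le

end Dilation

theorem iInf_Iio_Aerr_le_eLpNorm {σ₀ σ : ℝ} (hσ₀ : 0 < σ₀) (hσ : σ₀ < σ) {p : ℝ≥0∞}
    (hp : p ≠ ⊤) {f : ℝ → ℂ} (hf : AEStronglyMeasurable f volume) (hfin : Aerr σ₀ f p ≠ ⊤)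
    {g : ℂ → ℂ} (hg : ExpType σ g) :
    ⨅ τ ∈ Iio σ, Aerr τ f p ≤ eLpNorm (fun x : ℝ => f x - g x) p volume := by
  rcases eq_or_ne (eLpNorm (fun x : ℝ => f x - g x) p volume) ⊤ with hfg | hfg
  · exact hfg ▸ le_top
  obtain ⟨g₀, hg₀, hfg₀⟩ := exists_expType_eLpNorm_lt hfin.lt_top
  have hσ0 : 0 < σ := hσ₀.trans hσ
  have hgc : Continuous fun x : ℝ => g x := hg.1.continuous.comp Complex.continuous_ofReal
  have hg₀c : Continuous fun x : ℝ => g₀ x := hg₀.1.continuous.comp Complex.continuous_ofReal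
  set u : ℝ → ℂ := fun x => g x - g₀ x
  have hu : MemLp u p volume := by
    have h₀ : MemLp (fun x : ℝ => f x - g₀ x) p volume :=
      ⟨hf.sub hg₀c.aestronglyMeasurable, hfg₀⟩
    have h₁ : MemLp (fun x : ℝ => f x - g x) p volume :=
      ⟨hf.sub hgc.aestronglyMeasurable, hfg.lt_top⟩
    convert h₀.sub h₁ using 1
    ext x
    simp only [u, Pi.sub_apply]
    ring
  have hbound : ∀ l ∈ Ioo (σ₀ / σ) 1, ⨅ τ ∈ Iio σ, Aerr τ f p ≤
      eLpNorm ((fun x : ℝ => f x - g x) + fun x => u x - u (l * x)) p volume := by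
    rintro l ⟨hl₀, hl₁⟩
    have hl0 : 0 < l := (div_pos hσ₀ hσ0).trans hl₀
    have hτ : σ₀ ≤ l * σ := ((div_lt_iff₀ hσ0).1 hl₀).le
    refine (iInf₂_le (l * σ) (show l * σ < σ by nlinarith)).trans ?_
    have hG := (hg₀.mono hτ).add ((hg.sub (hg₀.mono hσ.le)).comp_mul hl0)
    refine (Aerr_le_eLpNorm hG f p).trans_eq (congrArg (eLpNorm · p volume) ?_)
    ext x
    simp only [u, Pi.add_apply, Complex.ofReal_mul]
    ring
  have huc : Continuous u := hgc.sub hg₀c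
  refine le_of_forall_gt fun a ha => ?_
  obtain ⟨l, hl, hla⟩ := (Eventually.and (Ioo_mem_nhdsLT ((div_lt_one hσ0).2 hσ))
    (eventually_eLpNorm_add_lt (hf.sub hgc.aestronglyMeasurable)
      (fun l => (huc.sub (huc.comp (continuous_const_mul l))).aestronglyMeasurable)
      ((hu.tendsto_eLpNorm_sub_comp_mul_left hp).mono_left nhdsWithin_le_nhds) ha)).exists
  exact (hbound l hl).trans_lt hla

theorem Aerr_antitone_and_left_continuous_general (σ₀ : ℝ) (hσ₀ : 0 < σ₀)
    (p : ℝ≥0∞) (hp' : p ≠ ⊤) (f : ℝ → ℂ)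
    (hf : AEStronglyMeasurable f volume) (hfin : Aerr σ₀ f p ≠ ⊤) :
    (∀ σ₁ σ₂ : ℝ, σ₀ ≤ σ₁ → σ₁ ≤ σ₂ → Aerr σ₂ f p ≤ Aerr σ₁ f p) ∧
      ∀ σ : ℝ, σ₀ < σ →
        Tendsto (fun τ => Aerr τ f p) (nhdsWithin σ (Iio σ)) (nhds (Aerr σ f p)) := by
  refine ⟨fun σ₁ σ₂ _ h => Aerr_antitone f p h, fun σ hσ => ?_⟩
  have hinf : ⨅ τ ∈ Iio σ, Aerr τ f p = Aerr σ f p :=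
    le_antisymm (le_iInf₂ fun _ hg => iInf_Iio_Aerr_le_eLpNorm hσ₀ hσ hp' hf hfin hg)
      (le_iInf₂ fun _ hτ => Aerr_antitone f p (le_of_lt hτ))
  simpa only [sInf_image, hinf] using (Aerr_antitone f p).tendsto_nhdsLT σ

theorem Aerr_antitone_and_left_continuous (σ₀ : ℝ) (hσ₀ : 0 < σ₀)
    (p : ℝ≥0∞) (hp : 0 < p) (hp' : p ≠ ⊤) (f : ℝ → ℂ)
    (hf : AEStronglyMeasurable f volume) (hfin : Aerr σ₀ f p ≠ ⊤) :
    (∀ σ₁ σ₂ : ℝ, σ₀ ≤ σ₁ → σ₁ ≤ σ₂ → Aerr σ₂ f p ≤ Aerr σ₁ f p) ∧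
      ∀ σ : ℝ, σ₀ < σ →
        Tendsto (fun τ => Aerr τ f p) (nhdsWithin σ (Iio σ)) (nhds (Aerr σ f p)) :=
  Aerr_antitone_and_left_continuous_general σ₀ hσ₀ p hp' f hf hfin
end

section
/- For any polynomial P(x) = Σ_{k=0}^n c_k x^k with complex coefficients and n ∈ ℕ, and every k = 0,1,…,n, the coefficient bound |c_k| ≤ n^k / k! · ‖P‖_{L_∞([−1,1])} holds. -/
/-!
Rotating `P` so that its `k`-th coefficient becomes a nonnegative real and taking real parts
reduces the bound to real polynomials `Q`. Replacing `Q` by its part of the parity of `k`, one may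
assume that `Q` is even or odd, of degree at most some `ν ≤ n` with `ν ≡ k (mod 2)`.

For such `Q`, V. A. Markov's argument gives `|Q_k| ≤ |t_{ν,k}| ‖Q‖`, where `t_{ν,k}` is the
`k`-th coefficient of the Chebyshev polynomial `T_ν`. Otherwise `T_ν - c Q`, with `c` chosen to
cancel the `k`-th coefficient, still alternates in sign at the `ν + 1` extremal points of `T_ν`,
so it has `ν` distinct real roots. By parity its coefficient of index `k + 1` vanishes too, and by
Rolle's theorem a real polynomial with two consecutive vanishing coefficients has fewer distinct
real roots than its degree.

Finally `k! t_{ν,k} = T_ν^{(k)}(0)`, and the recurrence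
`T_ν^{(k+2)}(0) = -(ν² - k²) T_ν^{(k)}(0)` bounds this by `ν ^ k`.
-/

open Set Polynomial Polynomial.Chebyshev
open scoped Nat

namespace Polynomial

theorem iterate_derivative_eval_zero {R : Type*} [Semiring R] (p : R[X]) (k : ℕ) :
    (derivative^[k] p).eval 0 = k ! • p.coeff k := by
  rw [← coeff_zero_eq_eval_zero, coeff_iterate_derivative, zero_add, Nat.descFactorial_self]

theorem abs_iterate_derivative_T_real_eval_zero_le (n k : ℕ) :
    |(derivative^[k] (T ℝ n)).eval 0| ≤ (n : ℝ) ^ k := by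
  induction k using Nat.twoStepInduction with
  | zero => simpa using abs_eval_T_real_le_one n (x := 0) (by simp)
  | one =>
    rw [Function.iterate_one, T_derivative_eq_U, eval_mul, abs_mul, pow_one]
    have hU : |(U ℝ ((n : ℤ) - 1)).eval 0| ≤ 1 := by
      rw [U_eval_zero]
      split_ifs <;> simp
    simpa using mul_le_of_le_one_right (by positivity) hU
  | more k ih _ =>
    have hrec := iterate_derivative_T_eval_zero_recurrence (R := ℝ) n k
    push_cast at hrec
    rw [hrec, abs_mul, abs_neg]
    rcases le_or_gt k n with hkn | hnk
    · have hfactor : |(n : ℝ) ^ 2 - k ^ 2| ≤ n ^ 2 := by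
        rw [abs_of_nonneg (by nlinarith [(Nat.cast_le (α := ℝ)).2 hkn])]
        nlinarith
      calc _ ≤ (n : ℝ) ^ 2 * n ^ k := by gcongr
        _ = _ := by ring
    · rw [iterate_derivative_eq_zero (by simpa using hnk)]
      simp

theorem abs_coeff_T_real_le (n k : ℕ) : |(T ℝ n).coeff k| ≤ (n : ℝ) ^ k / k ! := by
  have h := abs_iterate_derivative_T_real_eval_zero_le n k
  rw [iterate_derivative_eval_zero, nsmul_eq_mul, abs_mul, Nat.abs_cast] at h
  rw [le_div_iff₀ (by positivity)]
  linarith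

def HasParity {R : Type*} [Semiring R] (p : R[X]) (k : ℕ) : Prop :=
  ∀ i, Odd (i + k) → p.coeff i = 0

theorem HasParity.exists_natDegree_le {R : Type*} [Semiring R] {p : R[X]} {k n : ℕ}
    (hp : HasParity p k) (hk : k ≤ n) (hn : p.natDegree ≤ n) :
    ∃ ν ≤ n, k ≤ ν ∧ Even (ν + k) ∧ p.natDegree ≤ ν := by
  by_cases hnk : Even (n + k)
  · exact ⟨n, le_rfl, hk, hnk, hn⟩
  have hkn : k < n := lt_of_le_of_ne hk fun h => hnk (h ▸ ⟨k, rfl⟩)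
  refine ⟨n - 1, Nat.sub_le n 1, by omega, by grind, ?_⟩
  rw [natDegree_le_iff_coeff_eq_zero]
  intro i hi
  obtain rfl | hni := eq_or_lt_of_le (show n ≤ i by omega)
  · exact hp _ (Nat.not_even_iff_odd.mp hnk)
  · exact coeff_eq_zero_of_natDegree_lt (by omega)

theorem coeff_comp_neg_X {R : Type*} [CommRing R] (p : R[X]) (i : ℕ) :
    (p.comp (-X)).coeff i = (-1) ^ i * p.coeff i := by
  rw [← neg_one_mul, ← C_1, ← C_neg, comp_C_mul_X_coeff, mul_comm]

theorem hasParity_T_real (n : ℕ) : HasParity (T ℝ n) n := by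
  intro i hi
  have hcomp : (T ℝ n).comp (-X) = C ((-1) ^ n) * T ℝ n :=
    Polynomial.funext fun x => by simp
  have h := congr_arg (coeff · i) hcomp
  simp only [coeff_comp_neg_X, coeff_C_mul] at h
  set a := (T ℝ n).coeff i
  have ha : a = -a :=
    calc a = (-1) ^ i * ((-1) ^ i * a) := by
          rw [← mul_assoc, ← pow_add, Even.neg_one_pow ⟨i, rfl⟩, one_mul]
      _ = (-1) ^ i * ((-1) ^ n * a) := by rw [h]
      _ = -a := by rw [← mul_assoc, ← pow_add, hi.neg_one_pow, neg_one_mul]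
  linarith

noncomputable def parityPart (p : ℝ[X]) (k : ℕ) : ℝ[X] :=
  C 2⁻¹ * (p + C ((-1) ^ k) * p.comp (-X))

theorem coeff_parityPart (p : ℝ[X]) (k i : ℕ) :
    (parityPart p k).coeff i = 2⁻¹ * (1 + (-1) ^ (i + k)) * p.coeff i := by
  rw [parityPart, coeff_C_mul, coeff_add, coeff_C_mul, coeff_comp_neg_X, pow_add]
  ring

theorem hasParity_parityPart (p : ℝ[X]) (k : ℕ) : HasParity (parityPart p k) k := by
  intro i hi
  rw [coeff_parityPart, Odd.neg_one_pow hi]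
  ring

theorem coeff_parityPart_self (p : ℝ[X]) (k : ℕ) : (parityPart p k).coeff k = p.coeff k := by
  rw [coeff_parityPart, Even.neg_one_pow ⟨k, rfl⟩]
  ring

theorem natDegree_parityPart_le (p : ℝ[X]) (k : ℕ) :
    (parityPart p k).natDegree ≤ p.natDegree := by
  rw [natDegree_le_iff_coeff_eq_zero]
  intro i hi
  rw [coeff_parityPart, coeff_eq_zero_of_natDegree_lt hi, mul_zero]

theorem abs_eval_parityPart_le {p : ℝ[X]} {M : ℝ} (k : ℕ)
    (hp : ∀ x ∈ Icc (-1 : ℝ) 1, |p.eval x| ≤ M) {x : ℝ} (hx : x ∈ Icc (-1 : ℝ) 1) :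
    |(parityPart p k).eval x| ≤ M := by
  have hneg : -x ∈ Icc (-1 : ℝ) 1 := by constructor <;> linarith [hx.1, hx.2]
  have h₁ := hp x hx
  have h₂ := hp (-x) hneg
  simp only [parityPart, eval_mul, eval_C, eval_add, eval_comp, eval_neg, eval_X]
  rw [abs_mul, abs_of_pos (by norm_num : (0 : ℝ) < 2⁻¹)]
  calc 2⁻¹ * |p.eval x + (-1) ^ k * p.eval (-x)| ≤ 2⁻¹ * (|p.eval x| + |p.eval (-x)|) := by
        gcongr
        exact (abs_add_le _ _).trans_eq (by rw [abs_mul, abs_neg_one_pow, one_mul])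
    _ ≤ M := by linarith

theorem le_card_roots_toFinset_of_sign_changes {p : ℝ[X]} {n : ℕ} {x : ℕ → ℝ}
    (hx : StrictAntiOn x (Finset.range (n + 1)))
    (hp : ∀ i < n, p.eval (x i) * p.eval (x (i + 1)) < 0) :
    n ≤ p.roots.toFinset.card := by
  have hmem : ∀ j ≤ n, j ∈ (Finset.range (n + 1) : Set ℕ) := fun j hj => by
    simpa [Nat.lt_succ_iff] using hj
  have hroot : ∀ i < n, ∃ z ∈ Ioo (x (i + 1)) (x i), p ≠ 0 ∧ p.IsRoot z := by
    intro i hi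
    have hlt : x (i + 1) < x i := hx (hmem i hi.le) (hmem (i + 1) hi) (Nat.lt_succ_self i)
    have hp0 : p ≠ 0 := by
      rintro rfl
      simpa using hp i hi
    rcases mul_neg_iff.mp (hp i hi) with ⟨hpos, hneg⟩ | ⟨hneg, hpos⟩
    · obtain ⟨z, hz, hz0⟩ := intermediate_value_Ioo hlt.le p.continuousOn ⟨hneg, hpos⟩
      exact ⟨z, hz, hp0, hz0⟩
    · obtain ⟨z, hz, hz0⟩ := intermediate_value_Ioo' hlt.le p.continuousOn ⟨hneg, hpos⟩
      exact ⟨z, hz, hp0, hz0⟩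
  choose! z hz hzroot using hroot
  have hz_anti : StrictAntiOn z (Finset.range n) := by
    intro i hi j hj hij
    simp only [Finset.coe_range, mem_Iio] at hi hj
    calc z j < x j := (hz j hj).2
      _ ≤ x (i + 1) := hx.antitoneOn (hmem (i + 1) hi) (hmem j hj.le) hij
      _ < z i := (hz i hi).1
  calc n = (Finset.range n).card := (Finset.card_range n).symm
    _ ≤ p.roots.toFinset.card :=
      Finset.card_le_card_of_injOn z (fun i hi => by
        rw [Finset.mem_coe, Finset.mem_range] at hi
        simpa [mem_roots'] using hzroot i hi) hz_anti.injOn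

theorem card_roots_toFinset_le_iterate_derivative (p : ℝ[X]) (k : ℕ) :
    p.roots.toFinset.card ≤ (derivative^[k] p).roots.toFinset.card + k := by
  induction k with
  | zero => simp
  | succ k ih =>
    rw [Function.iterate_succ_apply']
    linarith [card_roots_toFinset_le_derivative (derivative^[k] p)]

theorem card_roots_toFinset_lt_natDegree_of_X_sq_dvd {R : Type*} [CommRing R] [IsDomain R]
    [DecidableEq R] {p : R[X]} (hp : p ≠ 0) (hX : X ^ 2 ∣ p) :
    p.roots.toFinset.card < p.natDegree := by
  obtain ⟨q, rfl⟩ := hX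
  have hq : q ≠ 0 := right_ne_zero_of_mul hp
  have hsub : (X ^ 2 * q).roots.toFinset ⊆ insert 0 q.roots.toFinset := by
    intro a ha
    simp only [Multiset.mem_toFinset, mem_roots hp, IsRoot, eval_mul, eval_pow, eval_X,
      mul_eq_zero, pow_eq_zero_iff two_ne_zero] at ha
    rcases ha with rfl | ha
    · exact Finset.mem_insert_self _ _
    · exact Finset.mem_insert_of_mem (by simpa [mem_roots hq] using ha)
  calc (X ^ 2 * q).roots.toFinset.card ≤ q.roots.toFinset.card + 1 :=
        (Finset.card_le_card hsub).trans (Finset.card_insert_le _ _)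
    _ ≤ q.natDegree + 1 := by
        gcongr
        exact (Multiset.toFinset_card_le _).trans (card_roots' q)
    _ < (X ^ 2 * q).natDegree := by
        rw [natDegree_mul (pow_ne_zero 2 X_ne_zero) hq, natDegree_X_pow]
        omega

theorem card_roots_toFinset_lt_natDegree_of_coeff_eq_zero {p : ℝ[X]} (hp : p ≠ 0) {k : ℕ}
    (hk : k ≤ p.natDegree) (h₀ : p.coeff k = 0) (h₁ : p.coeff (k + 1) = 0) :
    p.roots.toFinset.card < p.natDegree := by
  have hlt : k < p.natDegree := lt_of_le_of_ne hk fun h =>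
    hp (leadingCoeff_eq_zero.mp (by rwa [leadingCoeff, ← h]))
  have hS : derivative^[k] p ≠ 0 := by
    intro h
    have hlead := coeff_iterate_derivative (k := k) p (p.natDegree - k)
    rw [h, coeff_zero, Nat.sub_add_cancel hlt.le, eq_comm, smul_eq_zero,
      Nat.descFactorial_eq_zero_iff_lt] at hlead
    exact hlead.elim hlt.le.not_gt (hp ∘ leadingCoeff_eq_zero.mp)
  have hX : X ^ 2 ∣ derivative^[k] p := by
    rw [X_pow_dvd_iff]
    intro d hd
    interval_cases d <;> simp [coeff_iterate_derivative, h₀, h₁, add_comm 1 k]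
  calc p.roots.toFinset.card ≤ (derivative^[k] p).roots.toFinset.card + k :=
        card_roots_toFinset_le_iterate_derivative p k
    _ < (derivative^[k] p).natDegree + k := by
        gcongr
        exact card_roots_toFinset_lt_natDegree_of_X_sq_dvd hS hX
    _ ≤ p.natDegree := by
        have := natDegree_iterate_derivative p k
        omega

theorem neg_one_pow_mul_eval_T_real_sub_C_mul_pos {Q : ℝ[X]} {M c : ℝ}
    (hQM : ∀ x ∈ Icc (-1 : ℝ) 1, |Q.eval x| ≤ M) (hc : |c| * M < 1) {ν i : ℕ} (hi : i ≤ ν) :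
    0 < (-1) ^ i * (T ℝ ν - C c * Q).eval (node ν i) := by
  have hsmall : |(-1) ^ i * (c * Q.eval (node ν i))| < 1 := by
    rw [abs_mul, abs_neg_one_pow, one_mul, abs_mul]
    exact lt_of_le_of_lt (by gcongr; exact hQM _ node_mem_Icc) hc
  rw [eval_sub, eval_T_real_node (Finset.mem_Iic.mpr hi), eval_mul, eval_C, mul_sub, ← pow_add,
    Even.neg_one_pow ⟨i, rfl⟩]
  linarith [le_abs_self ((-1) ^ i * (c * Q.eval (node ν i)))]

theorem abs_coeff_le_abs_coeff_T_real_mul {Q : ℝ[X]} {M : ℝ} {k ν : ℕ} (hkν : k ≤ ν)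
    (hν : Even (ν + k)) (hQ : HasParity Q k) (hdeg : Q.natDegree ≤ ν)
    (hQM : ∀ x ∈ Icc (-1 : ℝ) 1, |Q.eval x| ≤ M) :
    |Q.coeff k| ≤ |(T ℝ ν).coeff k| * M := by
  by_contra! hlt
  have hM : 0 ≤ M := (abs_nonneg _).trans (hQM 0 ⟨by norm_num, by norm_num⟩)
  have hQk : Q.coeff k ≠ 0 := by
    rintro h
    rw [h, abs_zero] at hlt
    exact hlt.not_ge (by positivity)
  set c := (T ℝ ν).coeff k / Q.coeff k
  have hc : |c| * M < 1 := by
    rwa [abs_div, div_mul_eq_mul_div, div_lt_one (abs_pos.mpr hQk)]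
  set R := T ℝ ν - C c * Q
  have halt : ∀ i ≤ ν, 0 < (-1) ^ i * R.eval (node ν i) := fun i hi =>
    neg_one_pow_mul_eval_T_real_sub_C_mul_pos hQM hc hi
  have hR : R ≠ 0 := by
    rintro h
    simpa [h] using halt 0 (Nat.zero_le ν)
  have hroots : ν ≤ R.roots.toFinset.card :=
    le_card_roots_toFinset_of_sign_changes (strictAntiOn_node ν) fun i hi => by
      have h₁ := halt i hi.le
      have h₂ := halt (i + 1) hi
      have hsq : (-1 : ℝ) ^ i * (-1) ^ i = 1 := by rw [← pow_add, Even.neg_one_pow ⟨i, rfl⟩]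
      rw [pow_succ] at h₂
      nlinarith [mul_pos h₁ h₂]
  have hRdeg : R.natDegree ≤ ν :=
    (natDegree_sub_le _ _).trans
      (max_le (by rw [natDegree_T, Int.natAbs_natCast]) ((natDegree_C_mul_le _ _).trans hdeg))
  have hkR : k ≤ R.natDegree :=
    hkν.trans (hroots.trans ((Multiset.toFinset_card_le _).trans (card_roots' R)))
  have h₀ : R.coeff k = 0 := by simp [R, c, hQk]
  have h₁ : R.coeff (k + 1) = 0 := by
    simp [R, hQ (k + 1) ⟨k, by ring⟩, hasParity_T_real ν (k + 1) (by grind)]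
  exact (card_roots_toFinset_lt_natDegree_of_coeff_eq_zero hR hkR h₀ h₁).not_ge
    (hRdeg.trans hroots)

theorem abs_coeff_le_of_abs_eval_le {Q : ℝ[X]} {M : ℝ} {k n : ℕ} (hk : k ≤ n)
    (hdeg : Q.natDegree ≤ n) (hQM : ∀ x ∈ Icc (-1 : ℝ) 1, |Q.eval x| ≤ M) :
    |Q.coeff k| ≤ (n : ℝ) ^ k / k ! * M := by
  have hM : 0 ≤ M := (abs_nonneg _).trans (hQM 0 ⟨by norm_num, by norm_num⟩)
  obtain ⟨ν, hνn, hkν, hν, hdegν⟩ := (hasParity_parityPart Q k).exists_natDegree_le hk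
    ((natDegree_parityPart_le Q k).trans hdeg)
  calc |Q.coeff k| = |(parityPart Q k).coeff k| := by rw [coeff_parityPart_self]
    _ ≤ |(T ℝ ν).coeff k| * M := abs_coeff_le_abs_coeff_T_real_mul hkν hν
        (hasParity_parityPart Q k) hdegν fun x hx => abs_eval_parityPart_le k hQM hx
    _ ≤ (ν : ℝ) ^ k / k ! * M := by gcongr; exact abs_coeff_T_real_le ν k
    _ ≤ (n : ℝ) ^ k / k ! * M := by gcongr

noncomputable def rePart (P : ℂ[X]) : ℝ[X] :=
  ∑ i ∈ Finset.range (P.natDegree + 1), monomial i (P.coeff i).re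

theorem coeff_rePart (P : ℂ[X]) (i : ℕ) : (rePart P).coeff i = (P.coeff i).re := by
  simp only [rePart, finsetSum_coeff, coeff_monomial, Finset.sum_ite_eq', Finset.mem_range]
  split_ifs with hi
  · rfl
  · rw [coeff_eq_zero_of_natDegree_lt (by omega), Complex.zero_re]

theorem natDegree_rePart_le (P : ℂ[X]) : (rePart P).natDegree ≤ P.natDegree := by
  rw [natDegree_le_iff_coeff_eq_zero]
  intro i hi
  rw [coeff_rePart, coeff_eq_zero_of_natDegree_lt hi, Complex.zero_re]

theorem eval_rePart (P : ℂ[X]) (x : ℝ) : (rePart P).eval x = (P.eval (x : ℂ)).re := by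
  rw [rePart, eval_finsetSum, eval_eq_sum_range, Complex.re_sum]
  refine Finset.sum_congr rfl fun i _ => ?_
  rw [eval_monomial, ← Complex.ofReal_pow, Complex.re_mul_ofReal]

end Polynomial

theorem markov_coefficient_bound_general (n : ℕ) (P : Polynomial ℂ)
    (hP : P.natDegree ≤ n) (k : ℕ) (hk : k ≤ n) :
    ‖P.coeff k‖ ≤ (n : ℝ) ^ k / (Nat.factorial k) *
      ⨆ x : Icc (-1 : ℝ) 1, ‖P.eval ((x : ℝ) : ℂ)‖ := by
  obtain ⟨u, hu, hcoeff⟩ := Complex.exists_norm_eq_mul_self (P.coeff k)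
  have hbdd : BddAbove (range fun x : Icc (-1 : ℝ) 1 => ‖P.eval ((x : ℝ) : ℂ)‖) :=
    (isCompact_range (by fun_prop)).bddAbove
  have hbound : ∀ x ∈ Icc (-1 : ℝ) 1, |(rePart (C u * P)).eval x| ≤
      ⨆ x : Icc (-1 : ℝ) 1, ‖P.eval ((x : ℝ) : ℂ)‖ := fun x hx =>
    calc |(rePart (C u * P)).eval x| ≤ ‖(C u * P).eval (x : ℂ)‖ := by
          rw [eval_rePart]
          exact Complex.abs_re_le_norm _
      _ = ‖P.eval (x : ℂ)‖ := by rw [eval_mul, eval_C, norm_mul, hu, one_mul]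
      _ ≤ _ := le_ciSup hbdd ⟨x, hx⟩
  have hre := abs_coeff_le_of_abs_eval_le hk
    ((natDegree_rePart_le _).trans ((natDegree_C_mul_le _ _).trans hP)) hbound
  rwa [coeff_rePart, coeff_C_mul, ← hcoeff, Complex.ofReal_re, abs_norm] at hre

theorem markov_coefficient_bound (n : ℕ) (hn : 1 ≤ n) (P : Polynomial ℂ)
    (hP : P.natDegree ≤ n) (k : ℕ) (hk : k ≤ n) :
    ‖P.coeff k‖ ≤ (n : ℝ) ^ k / (Nat.factorial k) *
      ⨆ x : Icc (-1 : ℝ) 1, ‖P.eval ((x : ℝ) : ℂ)‖ :=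
  markov_coefficient_bound_general n P hP k hk
end

section
/- For every β ∈ ℝ \ {0} and every σ > 0, the best uniform approximation on ℝ of the function f_{0,β,c}(x) := cos(β log|x|) (x ≠ 0) by entire functions of exponential type σ equals 1, and the unique-best approximant is the zero function; i.e., A_σ(f_{0,β,c})_∞ = inf_{C∈ℝ} ‖f_{0,β,c} − C‖_{L_∞(ℝ)} = ‖f_{0,β,c}‖_{L_∞(ℝ)} = 1. -/
open MeasureTheory Set Filter
open scoped ENNReal

/-- The function `cos(β log|x|)`, viewed as a complex-valued function on ℝ. -/
noncomputable def f0c (β : ℝ) (x : ℝ) : ℂ := (Real.cos (β * Real.log |x|) : ℂ)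

open Topology

/-!
At the points `x_m = exp (-m π / |β|) → 0` the function `cos (β log |x|)` takes the values
`(-1) ^ m`. A continuous `g` with `‖f0c β - g‖_∞ ≤ c` therefore satisfies `‖1 - g 0‖ ≤ c` and
`‖-1 - g 0‖ ≤ c`, so `c ≥ 1`; the zero function attains this bound.

If an entire `g` attains it, then `Re g ≥ 0` at the even points and `Re g ≤ 0` at the odd ones,
so the real-analytic function `x ↦ Re g x` has zeros accumulating at `0` and vanishes on `ℝ`.
Then `‖1 - g x_{2n}‖ ≤ 1` forces `g x_{2n} = 0`, and `g = 0` by the identity theorem.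
-/

lemma le_of_ae_le_of_continuousAt {α : Type*} [TopologicalSpace α] [MeasurableSpace α]
    {μ : Measure α} [μ.IsOpenPosMeasure] {h : α → ℝ} {c : ℝ} (hae : ∀ᵐ x ∂μ, h x ≤ c)
    {x : α} (hx : ContinuousAt h x) : h x ≤ c :=
  ContinuousWithinAt.closure_le (Measure.dense_of_ae hae x)
    hx.continuousWithinAt continuousWithinAt_const fun _ hy => hy

lemma ae_norm_le_of_eLpNorm_top_le {α E : Type*} [MeasurableSpace α] {μ : Measure α}
    [NormedAddCommGroup E] {F : α → E} {c : ℝ} (hc : 0 ≤ c)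
    (h : eLpNorm F ⊤ μ ≤ ENNReal.ofReal c) : ∀ᵐ x ∂μ, ‖F x‖ ≤ c := by
  rw [eLpNorm_exponent_top] at h
  filter_upwards [ae_le_eLpNormEssSup (f := F) (μ := μ)] with x hx
  rw [← ENNReal.ofReal_le_ofReal_iff hc, ofReal_norm]
  exact hx.trans h

lemma AnalyticOnNhd.eq_zero_of_tendsto {𝕜 E : Type*} [NontriviallyNormedField 𝕜]
    [PreconnectedSpace 𝕜] [NormedAddCommGroup E] [NormedSpace 𝕜 E] {f : 𝕜 → E}
    (hf : AnalyticOnNhd 𝕜 f univ) {u : ℕ → 𝕜} {a : 𝕜} (hu : Tendsto u atTop (𝓝 a))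
    (hne : ∀ n, u n ≠ a) (hzero : ∀ n, f (u n) = 0) : f = 0 := by
  have hfreq : ∃ᶠ z in 𝓝[≠] a, f z = 0 :=
    (tendsto_nhdsWithin_iff.2 ⟨hu, .of_forall hne⟩).frequently (.of_forall hzero)
  exact (eqOn_univ _ _).1
    (hf.eqOn_zero_of_preconnected_of_frequently_eq_zero isPreconnected_univ (mem_univ a) hfreq)

namespace Complex

lemma re_nonneg_of_norm_one_sub_le_one {w : ℂ} (h : ‖1 - w‖ ≤ 1) : 0 ≤ w.re := by
  have := (le_abs_self _).trans ((abs_re_le_norm (1 - w)).trans h)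
  simp only [sub_re, one_re] at this
  linarith

lemma eq_zero_of_norm_one_sub_le_one_of_re_eq_zero {w : ℂ} (h : ‖1 - w‖ ≤ 1) (hre : w.re = 0) :
    w = 0 := by
  have hsq : normSq (1 - w) ≤ 1 := by
    rw [normSq_eq_norm_sq]
    exact pow_le_one₀ (norm_nonneg _) h
  simp only [normSq_apply, sub_re, one_re, sub_im, one_im, hre] at hsq
  exact ext hre (by simpa using (by nlinarith : w.im = 0))

end Complex

lemma expType_zero (σ : ℝ) : ExpType σ 0 :=
  ⟨differentiable_const 0, fun _ _ => ⟨1, one_pos, fun _ => by simp; positivity⟩⟩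

lemma norm_f0c_le_one (β x : ℝ) : ‖f0c β x‖ ≤ 1 := by
  rw [f0c, Complex.norm_real]
  exact Real.abs_cos_le_one _

lemma continuousAt_f0c (β : ℝ) {x : ℝ} (hx : x ≠ 0) : ContinuousAt (f0c β) x := by
  unfold f0c
  fun_prop (disch := simpa)

noncomputable def cosLogPeak (β : ℝ) (m : ℕ) : ℝ := Real.exp (-(m * (Real.pi / |β|)))

lemma cosLogPeak_pos (β : ℝ) (m : ℕ) : 0 < cosLogPeak β m := Real.exp_pos _

lemma cosLogPeak_antitone (β : ℝ) : Antitone (cosLogPeak β) := fun m n hmn => by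
  unfold cosLogPeak
  gcongr

lemma tendsto_cosLogPeak {β : ℝ} (hβ : β ≠ 0) : Tendsto (cosLogPeak β) atTop (𝓝 0) :=
  Real.tendsto_exp_atBot.comp <| tendsto_neg_atTop_atBot.comp <|
    tendsto_natCast_atTop_atTop.atTop_mul_const (by positivity)

lemma tendsto_cosLogPeak_two_mul_add {β : ℝ} (hβ : β ≠ 0) (k : ℕ) :
    Tendsto (fun n => cosLogPeak β (2 * n + k)) atTop (𝓝 0) :=
  (tendsto_cosLogPeak hβ).comp
    (tendsto_atTop_mono (fun n => show n ≤ 2 * n + k by omega) tendsto_id)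

lemma f0c_cosLogPeak {β : ℝ} (hβ : β ≠ 0) (m : ℕ) : f0c β (cosLogPeak β m) = (-1) ^ m := by
  have harg : abs (β * Real.log |cosLogPeak β m|) = m * Real.pi := by
    rw [cosLogPeak, abs_of_pos (Real.exp_pos _), Real.log_exp, abs_mul, abs_neg,
      abs_of_nonneg (by positivity : (0 : ℝ) ≤ m * (Real.pi / |β|))]
    field_simp
  rw [f0c, ← Real.cos_abs, harg, Real.cos_nat_mul_pi]
  push_cast
  rfl

lemma norm_neg_one_pow_sub_le_of_ae {β : ℝ} (hβ : β ≠ 0) {g : ℝ → ℂ} (hg : Continuous g)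
    {c : ℝ} (h : ∀ᵐ x, ‖f0c β x - g x‖ ≤ c) (m : ℕ) :
    ‖(-1) ^ m - g (cosLogPeak β m)‖ ≤ c := by
  rw [← f0c_cosLogPeak hβ]
  exact le_of_ae_le_of_continuousAt h
    ((continuousAt_f0c β (cosLogPeak_pos β m).ne').sub hg.continuousAt).norm

lemma one_le_of_ae_norm_f0c_sub_le {β : ℝ} (hβ : β ≠ 0) {g : ℝ → ℂ} (hg : Continuous g)
    {c : ℝ} (h : ∀ᵐ x, ‖f0c β x - g x‖ ≤ c) : 1 ≤ c := by
  have hlim : ∀ k : ℕ, ‖(-1) ^ k - g 0‖ ≤ c := fun k =>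
    le_of_tendsto'
      (tendsto_const_nhds.sub ((hg.tendsto 0).comp (tendsto_cosLogPeak_two_mul_add hβ k))).norm
      fun n => by simpa [pow_add, pow_mul] using norm_neg_one_pow_sub_le_of_ae hβ hg h (2 * n + k)
  have h_one : ‖(1 : ℂ) - g 0‖ ≤ c := by simpa using hlim 0
  have h_neg_one : ‖(-1 : ℂ) - g 0‖ ≤ c := by simpa using hlim 1
  suffices (2 : ℝ) ≤ 2 * c by linarith
  calc (2 : ℝ) = ‖(1 - g 0) - (-1 - g 0)‖ := by norm_num
    _ ≤ ‖1 - g 0‖ + ‖-1 - g 0‖ := norm_sub_le _ _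
    _ ≤ 2 * c := by linarith

lemma one_le_eLpNorm_f0c_sub {β : ℝ} (hβ : β ≠ 0) {g : ℝ → ℂ} (hg : Continuous g) :
    1 ≤ eLpNorm (fun x => f0c β x - g x) ⊤ volume := by
  by_contra! hlt
  obtain ⟨c, hc0, hlt, hc1⟩ := ENNReal.lt_iff_exists_real_btwn.1 hlt
  have h1c := one_le_of_ae_norm_f0c_sub_le hβ hg (ae_norm_le_of_eLpNorm_top_le hc0 hlt.le)
  exact hc1.not_ge (by simpa using ENNReal.ofReal_le_ofReal h1c)

lemma eq_zero_of_ae_norm_f0c_sub_le_one {β : ℝ} (hβ : β ≠ 0) {g : ℂ → ℂ}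
    (hg : Differentiable ℂ g) (h : ∀ᵐ x : ℝ, ‖f0c β x - g x‖ ≤ 1) : g = 0 := by
  have hpeak := norm_neg_one_pow_sub_le_of_ae hβ (hg.continuous.comp Complex.continuous_ofReal) h
  have heven : ∀ n, ‖1 - g (cosLogPeak β (2 * n))‖ ≤ 1 := fun n => by
    simpa [pow_mul] using hpeak (2 * n)
  have hodd : ∀ n, ‖1 - -g (cosLogPeak β (2 * n + 1))‖ ≤ 1 := fun n => by
    rw [← norm_neg]
    simpa [pow_add, pow_mul, sub_eq_add_neg, add_comm] using hpeak (2 * n + 1)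
  have hre : AnalyticOnNhd ℝ (fun x : ℝ => (g x).re) univ := fun x _ =>
    (Complex.reCLM.analyticAt _).comp
      (((hg.analyticAt x).restrictScalars (𝕜 := ℝ)).comp (Complex.ofRealCLM.analyticAt x))
  have hzero : ∀ n, ∃ t ∈ Icc (cosLogPeak β (2 * n + 1)) (cosLogPeak β (2 * n)), (g t).re = 0 :=
    fun n => intermediate_value_Icc (cosLogPeak_antitone β (by omega))
      (hre.continuousOn.mono (subset_univ _))
      ⟨by simpa using Complex.re_nonneg_of_norm_one_sub_le_one (hodd n),
        Complex.re_nonneg_of_norm_one_sub_le_one (heven n)⟩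
  choose t ht hgt using hzero
  have ht0 : Tendsto t atTop (𝓝 0) :=
    tendsto_of_tendsto_of_tendsto_of_le_of_le (tendsto_cosLogPeak_two_mul_add hβ 1)
      (by simpa using tendsto_cosLogPeak_two_mul_add hβ 0) (fun n => (ht n).1) fun n => (ht n).2
  have hre0 : (fun x : ℝ => (g x).re) = 0 :=
    hre.eq_zero_of_tendsto ht0 (fun n => ((cosLogPeak_pos β _).trans_le (ht n).1).ne') hgt
  have hgpeak : ∀ n, g (cosLogPeak β (2 * n)) = 0 := fun n =>
    Complex.eq_zero_of_norm_one_sub_le_one_of_re_eq_zero (heven n) (congrFun hre0 _)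
  refine (Complex.analyticOnNhd_univ_iff_differentiable.2 hg).eq_zero_of_tendsto ?_
    (fun n => Complex.ofReal_ne_zero.2 (cosLogPeak_pos β _).ne') hgpeak
  exact (Complex.continuous_ofReal.tendsto' 0 0 Complex.ofReal_zero).comp
    (by simpa using tendsto_cosLogPeak_two_mul_add hβ 0)

theorem bernstein_constant_cos_log_general (β : ℝ) (hβ : β ≠ 0) (σ : ℝ) :
    Aerr σ (f0c β) ⊤ = 1 ∧
      (⨅ c : ℝ, eLpNorm (fun x : ℝ => f0c β x - (c : ℂ)) ⊤ volume) = 1 ∧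
      eLpNorm (f0c β) ⊤ volume = 1 ∧
      ∀ g : ℂ → ℂ, ExpType σ g →
        eLpNorm (fun x : ℝ => f0c β x - g x) ⊤ volume = Aerr σ (f0c β) ⊤ →
        ∀ z : ℂ, g z = 0 := by
  have hnorm : eLpNorm (f0c β) ⊤ volume = 1 := by
    refine le_antisymm ?_ (by simpa using one_le_eLpNorm_f0c_sub hβ (g := 0) continuous_const)
    simpa using eLpNorm_le_of_ae_bound (μ := volume) (p := ⊤) (.of_forall (norm_f0c_le_one β))
  have hAerr : Aerr σ (f0c β) ⊤ = 1 :=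
    le_antisymm (iInf₂_le_of_le 0 (expType_zero σ) (by simpa using hnorm.le))
      (le_iInf₂ fun g hg =>
        one_le_eLpNorm_f0c_sub hβ (hg.1.continuous.comp Complex.continuous_ofReal))
  refine ⟨hAerr, ?_, hnorm, fun g hg herr => ?_⟩
  · exact le_antisymm (iInf_le_of_le 0 (by simpa using hnorm.le))
      (le_iInf fun c => one_le_eLpNorm_f0c_sub hβ continuous_const)
  · have hbd := ae_norm_le_of_eLpNorm_top_le zero_le_one (by rw [herr, hAerr, ENNReal.ofReal_one])
    exact congrFun (eq_zero_of_ae_norm_f0c_sub_le_one hβ hg.1 hbd)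

theorem bernstein_constant_cos_log (β : ℝ) (hβ : β ≠ 0) (σ : ℝ) (hσ : 0 < σ) :
    Aerr σ (f0c β) ⊤ = 1 ∧
      (⨅ c : ℝ, eLpNorm (fun x : ℝ => f0c β x - (c : ℂ)) ⊤ volume) = 1 ∧
      eLpNorm (f0c β) ⊤ volume = 1 ∧
      ∀ g : ℂ → ℂ, ExpType σ g →
        eLpNorm (fun x : ℝ => f0c β x - g x) ⊤ volume = Aerr σ (f0c β) ⊤ →
        ∀ z : ℂ, g z = 0 :=
  bernstein_constant_cos_log_general β hβ σ
end
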